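/- For p = 3, s = 2: for every integer n ≥ 1 and every integer b with 0 ≤ b < 3(n+1) and 3 ∤ b, one has M_{3,2,n}(b) < 0. -/

import Mathlib

open Polynomial Finset

/-- The polynomial `T_{p,s,n}(q) = ∏_{j=0}^n ∏_{k=1}^{p-1} (1 - q^{pj+k})^s`. -/
noncomputable def borweinPoly (p s n : ℕ) : Polynomial ℤ :=
  ∏ j ∈ Finset.range (n + 1), ∏ k ∈ Finset.Icc 1 (p - 1),
    (1 - Polynomial.X ^ (p * j + k)) ^ s

/-- The coefficient `t_{i,p,s}` of `q^i` in `T_{p,s,n}(q)`. -/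
noncomputable def borweinCoeff (p s n i : ℕ) : ℤ := (borweinPoly p s n).coeff i

/-- The degree `d_{p,s,n} = p(p-1)s(n+1)^2/2` of `T_{p,s,n}`. -/
def borweinDeg (p s n : ℕ) : ℕ := p * (p - 1) * s * (n + 1) ^ 2 / 2

/-- `M_{p,s,n}(b) = ∑_{ℓ ≥ 0} t_{b + ℓ·p(n+1), p, s}`, a finite sum since the
coefficients vanish beyond the degree `d_{p,s,n}`. -/
noncomputable def borweinM (p s n b : ℕ) : ℤ :=
  ∑ l ∈ Finset.range (borweinDeg p s n + 1), borweinCoeff p s n (b + l * (p * (n + 1)))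


/-!
Put `N = 3(n+1)` and let `ζ` be a primitive `N`-th root of unity. The root-of-unity filter gives
`N · M(b) = ∑_{j<N} T(ζ^j) ζ^{-jb}`. Writing `T = ∏_{m<N, 3∤m} (1 - q^m)^2` and letting `d` be the
order of `ζ^j`, the factor `m = d` kills `T(ζ^j)` unless `3 ∣ d`; if `3 ∣ d` the product is
periodic mod `d` and `∏_{r<d, 3∤r} (1 - ω^r) = 3` gives `T(ζ^j) = 9^{N/d}`. The two terms of order
`d = 3` (`j = n+1, 2(n+1)`) add up to `9^{n+1}(w + w²) = -9^{n+1}`, `w` being a primitive cube root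
of unity because `3 ∤ b`. Every other nonzero term has `N/d` a proper divisor of `n+1`, hence
modulus at most `3^{n+1}`, and `N · 3^{n+1} < 9^{n+1}` once `n ≥ 1`.
-/

theorem Finset.prod_range_mul_eq_prod_prod_range {M : Type*} [CommMonoid M] (f : ℕ → M)
    (L N : ℕ) : ∏ i ∈ range (L * N), f i = ∏ l ∈ range L, ∏ r ∈ range N, f (l * N + r) := by
  induction L with
  | zero => simp
  | succ L ih => rw [Nat.succ_mul, prod_range_add, ih, prod_range_succ]

theorem Finset.sum_range_mul_eq_sum_sum_range {M : Type*} [AddCommMonoid M] (f : ℕ → M)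
    (L N : ℕ) : ∑ i ∈ range (L * N), f i = ∑ l ∈ range L, ∑ r ∈ range N, f (l * N + r) := by
  induction L with
  | zero => simp
  | succ L ih => rw [Nat.succ_mul, sum_range_add, ih, sum_range_succ]

theorem Function.Periodic.prod_range_mul {M : Type*} [CommMonoid M] {f : ℕ → M} {N : ℕ}
    (hf : Function.Periodic f N) (L : ℕ) :
    ∏ i ∈ range (L * N), f i = (∏ r ∈ range N, f r) ^ L := by
  calc ∏ i ∈ range (L * N), f i = ∏ _l ∈ range L, ∏ r ∈ range N, f r := by
        rw [prod_range_mul_eq_prod_prod_range]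
        exact prod_congr rfl fun l _ ↦ prod_congr rfl fun r _ ↦ by
          simpa [add_comm] using hf.nat_mul l r
    _ = (∏ r ∈ range N, f r) ^ L := by rw [prod_const, card_range]

namespace IsPrimitiveRoot

theorem pow_gcd {M : Type*} [CommMonoid M] {ζ : M} {N : ℕ} (hζ : IsPrimitiveRoot ζ N)
    (hN : N ≠ 0) (j : ℕ) : IsPrimitiveRoot (ζ ^ j) (N / N.gcd j) := by
  have := IsPrimitiveRoot.orderOf (ζ ^ j)
  rwa [(hζ.isOfFinOrder hN).orderOf_pow, ← hζ.eq_orderOf] at this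

theorem sum_pow_mul_eq_ite {R : Type*} [CommRing R] [IsDomain R] {ζ : R} {N : ℕ}
    (hζ : IsPrimitiveRoot ζ N) (k : ℕ) :
    ∑ j ∈ range N, ζ ^ (j * k) = if N ∣ k then (N : R) else 0 := by
  simp only [mul_comm _ k, pow_mul]
  split_ifs with h
  · simp [(hζ.pow_eq_one_iff_dvd k).2 h]
  · have hgeom := mul_geom_sum (ζ ^ k) N
    rw [← pow_mul, mul_comm k, pow_mul, hζ.pow_eq_one, one_pow, sub_self] at hgeom
    exact (mul_eq_zero.1 hgeom).resolve_left
      (sub_ne_zero.2 fun h1 ↦ h ((hζ.pow_eq_one_iff_dvd k).1 h1))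

/-- The root-of-unity filter; `ζ ^ (j * (N - b))` stands for `ζ ^ (-j b)`. -/
theorem mul_sum_coeff_add_mul_eq_sum_aeval {R K : Type*} [CommSemiring R] [CommRing K]
    [IsDomain K] [Algebra R K] {ζ : K} {N L b : ℕ} (hζ : IsPrimitiveRoot ζ N) (hb : b < N)
    {P : R[X]} (hP : P.natDegree < L * N) :
    (N : K) * ∑ l ∈ range L, algebraMap R K (P.coeff (b + l * N)) =
      ∑ j ∈ range N, aeval (ζ ^ j) P * ζ ^ (j * (N - b)) := by
  have hdvd : ∀ l r, r < N → (N ∣ l * N + r + (N - b) ↔ b = r) := by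
    intro l r hr
    rw [add_assoc, Nat.dvd_add_right (dvd_mul_left N l)]
    exact ⟨fun h ↦ by have := Nat.eq_of_dvd_of_lt_two_mul (by omega) h (by omega); omega,
      fun h ↦ by simp [← h, Nat.add_sub_cancel' hb.le]⟩
  symm
  calc ∑ j ∈ range N, aeval (ζ ^ j) P * ζ ^ (j * (N - b))
      = ∑ i ∈ range (L * N), algebraMap R K (P.coeff i) *
          ∑ j ∈ range N, ζ ^ (j * (i + (N - b))) := by
        simp only [aeval_eq_sum_range' hP, Algebra.smul_def, sum_mul, mul_sum]
        rw [sum_comm]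
        refine sum_congr rfl fun i _ ↦ sum_congr rfl fun j _ ↦ ?_
        rw [mul_assoc, ← pow_mul, ← pow_add, ← mul_add]
    _ = ∑ l ∈ range L, ∑ r ∈ range N,
          if b = r then algebraMap R K (P.coeff (b + l * N)) * N else 0 := by
        rw [sum_range_mul_eq_sum_sum_range]
        refine sum_congr rfl fun l _ ↦ sum_congr rfl fun r hr ↦ ?_
        simp only [hζ.sum_pow_mul_eq_ite, hdvd l r (mem_range.1 hr)]
        split_ifs with h <;> simp [h, add_comm]
    _ = (N : K) * ∑ l ∈ range L, algebraMap R K (P.coeff (b + l * N)) := by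
        simp [sum_ite_eq, mem_range.2 hb, mul_sum, mul_comm]

theorem prod_one_sub_pow_filter_ne_zero {K : Type*} [CommRing K] [IsDomain K] {ω : K} {d : ℕ}
    (hω : IsPrimitiveRoot ω d) (hd : d ≠ 0) : ∏ r ∈ range d with r ≠ 0, (1 - ω ^ r) = d := by
  obtain ⟨d, rfl⟩ := Nat.exists_eq_add_one_of_ne_zero hd
  rw [prod_filter, prod_range_succ']
  simpa using hω.prod_one_sub_pow_eq_order

theorem prod_one_sub_pow_filter_not_dvd {K : Type*} [Field K] [CharZero K] {ω : K} {d p : ℕ}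
    (hω : IsPrimitiveRoot ω d) (hd : d ≠ 0) (hpd : p ∣ d) :
    ∏ r ∈ range d with ¬ p ∣ r, (1 - ω ^ r) = p := by
  obtain ⟨e, rfl⟩ := hpd
  have hp : 0 < p := Nat.pos_of_ne_zero (left_ne_zero_of_mul hd)
  have he : e ≠ 0 := right_ne_zero_of_mul hd
  have hmultiples : ∏ r ∈ range (p * e) with r ≠ 0 ∧ p ∣ r, (1 - ω ^ r) = e := by
    have hωp : IsPrimitiveRoot (ω ^ p) e := by
      simpa [hp.ne'] using hω.pow_of_dvd hp.ne' (dvd_mul_right p e)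
    rw [← hωp.prod_one_sub_pow_filter_ne_zero he]
    refine (prod_nbij (p * ·) ?_ ?_ ?_ fun u _ ↦ by rw [pow_mul]).symm
    · intro u hu
      simp only [mem_filter, mem_range] at hu ⊢
      exact ⟨Nat.mul_lt_mul_of_pos_left hu.1 hp, by simp [hu.2, hp.ne'], dvd_mul_right p u⟩
    · exact fun u _ v _ huv ↦ Nat.eq_of_mul_eq_mul_left hp huv
    · intro r hr
      simp only [coe_filter, mem_range, Set.mem_ofPred_eq] at hr
      obtain ⟨hr, hr0, u, rfl⟩ := hr
      exact ⟨u, by simpa using ⟨Nat.lt_of_mul_lt_mul_left hr, by rintro rfl; simp at hr0⟩, rfl⟩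
  have hsplit := prod_filter_mul_prod_filter_not {r ∈ range (p * e) | r ≠ 0} (p ∣ ·)
    (fun r ↦ 1 - ω ^ r)
  rw [filter_filter, filter_filter, hmultiples, hω.prod_one_sub_pow_filter_ne_zero hd] at hsplit
  have hfilter : {r ∈ range (p * e) | r ≠ 0 ∧ ¬ p ∣ r} = {r ∈ range (p * e) | ¬ p ∣ r} :=
    filter_congr fun r _ ↦ ⟨And.right, fun h ↦ ⟨by rintro rfl; simp at h, h⟩⟩
  rw [hfilter, Nat.cast_mul, mul_comm (p : K)] at hsplit
  exact mul_left_cancel₀ (Nat.cast_ne_zero.2 he) hsplit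

end IsPrimitiveRoot

theorem borweinPoly_eq_prod_filter {p : ℕ} (hp : 0 < p) (s n : ℕ) :
    borweinPoly p s n = ∏ m ∈ range (p * (n + 1)) with ¬ p ∣ m, (1 - X ^ m) ^ s := by
  rw [prod_filter, mul_comm p, prod_range_mul_eq_prod_prod_range, borweinPoly]
  refine prod_congr rfl fun j _ ↦ ?_
  have hIcc : Icc 1 (p - 1) = {r ∈ range p | ¬ p ∣ j * p + r} := by
    ext r
    simp only [mem_Icc, mem_filter, mem_range, Nat.dvd_add_right (dvd_mul_left p j)]
    refine ⟨fun h ↦ ⟨by omega, fun hpr ↦ ?_⟩, fun ⟨hr, hpr⟩ ↦ ⟨?_, by omega⟩⟩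
    · exact absurd (Nat.le_of_dvd (by omega) hpr) (by omega)
    · exact Nat.pos_of_ne_zero fun h ↦ hpr (h ▸ dvd_zero p)
  rw [hIcc, ← prod_filter]
  simp only [mul_comm p j]

theorem natDegree_borweinPoly_le {p : ℕ} (hp : 0 < p) (s n : ℕ) :
    (borweinPoly p s n).natDegree ≤ p * (n + 1) * (s * (p * (n + 1))) := by
  rw [borweinPoly_eq_prod_filter hp]
  refine (natDegree_prod_le _ _).trans
    ((sum_le_card_nsmul _ _ (s * (p * (n + 1))) fun m hm ↦ ?_).trans ?_)
  · refine natDegree_pow_le.trans (Nat.mul_le_mul_left s ?_)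
    refine (natDegree_sub_le _ _).trans ?_
    simp only [natDegree_one, natDegree_X_pow, zero_le, sup_of_le_right]
    exact (mem_range.1 (mem_filter.1 hm).1).le
  · rw [smul_eq_mul]
    exact Nat.mul_le_mul_right _ ((card_filter_le _ _).trans (card_range _).le)

theorem aeval_borweinPoly_of_isPrimitiveRoot {K : Type*} [Field K] [CharZero K] {p s n d : ℕ}
    (hp : 0 < p) (hs : s ≠ 0) {ω : K} (hω : IsPrimitiveRoot ω d) (hd : d ∣ p * (n + 1)) :
    aeval ω (borweinPoly p s n) = if p ∣ d then (p : K) ^ (s * (p * (n + 1) / d)) else 0 := by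
  have hN : p * (n + 1) ≠ 0 := by positivity
  have hd0 : d ≠ 0 := by rintro rfl; exact hN (zero_dvd_iff.1 hd)
  simp only [borweinPoly_eq_prod_filter hp, map_prod, map_pow, map_sub, map_one, aeval_X]
  split_ifs with hpd
  · have hperiodic : Function.Periodic (fun m ↦ if ¬ p ∣ m then (1 - ω ^ m) ^ s else 1) d := by
      intro m
      simp only [Nat.dvd_add_left hpd, pow_add, hω.pow_eq_one, mul_one]
    obtain ⟨g, hg⟩ := hd
    rw [prod_filter, hg, Nat.mul_div_cancel_left g (Nat.pos_of_ne_zero hd0), mul_comm d g,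
      hperiodic.prod_range_mul, ← prod_filter, prod_pow,
      hω.prod_one_sub_pow_filter_not_dvd hd0 hpd, ← pow_mul]
  · have hdlt : d < p * (n + 1) :=
      (Nat.le_of_dvd (Nat.pos_of_ne_zero hN) hd).lt_of_ne fun h ↦ hpd (h ▸ dvd_mul_right p _)
    refine prod_eq_zero (mem_filter.2 ⟨mem_range.2 hdlt, hpd⟩) ?_
    simp [hω.pow_eq_one, hs]

theorem aeval_borweinPoly_pow_of_isPrimitiveRoot {K : Type*} [Field K] [CharZero K]
    {p s n : ℕ} (hp : 0 < p) (hs : s ≠ 0) {ζ : K} (hζ : IsPrimitiveRoot ζ (p * (n + 1)))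
    (j : ℕ) :
    aeval (ζ ^ j) (borweinPoly p s n) =
      if (p * (n + 1)).gcd j ∣ n + 1 then (p : K) ^ (s * (p * (n + 1)).gcd j) else 0 := by
  have hN : p * (n + 1) ≠ 0 := by positivity
  have hg := Nat.gcd_dvd_left (p * (n + 1)) j
  have hcond : p ∣ p * (n + 1) / (p * (n + 1)).gcd j ↔ (p * (n + 1)).gcd j ∣ n + 1 := by
    rw [Nat.dvd_div_iff_mul_dvd hg, mul_comm, Nat.mul_dvd_mul_iff_left hp]
  simp only [aeval_borweinPoly_of_isPrimitiveRoot hp hs (hζ.pow_gcd hN j) (Nat.div_dvd_of_dvd hg),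
    Nat.div_div_self hg hN, hcond]

theorem three_mul_lt_three_pow {K : ℕ} (hK : 2 ≤ K) : 3 * K < 3 ^ K := by
  induction K, hK using Nat.le_induction with
  | base => norm_num
  | succ K _ ih => rw [pow_succ]; omega

theorem two_mul_gcd_three_mul_le {K j : ℕ} (hj : j < 3 * K) (hK : j ≠ K) (h2K : j ≠ 2 * K)
    (hdvd : (3 * K).gcd j ∣ K) : 2 * (3 * K).gcd j ≤ K := by
  obtain ⟨c, hc⟩ := hdvd
  rcases c with _ | _ | c
  · omega
  · have hg : (3 * K).gcd j = K := by simpa using hc.symm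
    obtain ⟨t, rfl⟩ : K ∣ j := hg ▸ Nat.gcd_dvd_right (3 * K) j
    have ht : t < 3 := Nat.lt_of_mul_lt_mul_left (a := K) (by linarith)
    interval_cases t
    · simp at hg; omega
    · simp at hK
    · simp [mul_comm] at h2K
  · nlinarith

section ThreeTwo

variable {n : ℕ} {ζ : ℂ}

theorem aeval_borweinPoly_three_two (hζ : IsPrimitiveRoot ζ (3 * (n + 1))) (j : ℕ) :
    aeval (ζ ^ j) (borweinPoly 3 2 n) =
      if (3 * (n + 1)).gcd j ∣ n + 1 then 9 ^ (3 * (n + 1)).gcd j else 0 := by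
  rw [aeval_borweinPoly_pow_of_isPrimitiveRoot (by norm_num) two_ne_zero hζ, pow_mul]
  norm_num

theorem norm_aeval_borweinPoly_three_two_le (hζ : IsPrimitiveRoot ζ (3 * (n + 1))) {j : ℕ}
    (hj : j < 3 * (n + 1)) (hK : j ≠ n + 1) (h2K : j ≠ 2 * (n + 1)) :
    ‖aeval (ζ ^ j) (borweinPoly 3 2 n)‖ ≤ 3 ^ (n + 1) := by
  rw [aeval_borweinPoly_three_two hζ]
  split_ifs with h
  · rw [norm_pow, show ‖(9 : ℂ)‖ = 3 ^ 2 by norm_num, ← pow_mul]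
    exact pow_le_pow_right₀ (by norm_num) (two_mul_gcd_three_mul_le hj hK h2K h)
  · simp

theorem aeval_borweinPoly_three_two_main_terms (hζ : IsPrimitiveRoot ζ (3 * (n + 1))) {b : ℕ}
    (hb : b < 3 * (n + 1)) (hdvd : ¬ 3 ∣ b) :
    aeval (ζ ^ (n + 1)) (borweinPoly 3 2 n) * ζ ^ ((n + 1) * (3 * (n + 1) - b)) +
      aeval (ζ ^ (2 * (n + 1))) (borweinPoly 3 2 n) * ζ ^ (2 * (n + 1) * (3 * (n + 1) - b)) =
        -9 ^ (n + 1) := by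
  have hgcd₁ : (3 * (n + 1)).gcd (n + 1) = n + 1 := Nat.gcd_eq_right (dvd_mul_left _ _)
  have hgcd₂ : (3 * (n + 1)).gcd (2 * (n + 1)) = n + 1 := by rw [Nat.gcd_mul_right]; norm_num
  have hcube : IsPrimitiveRoot (ζ ^ (n + 1)) 3 := by
    simpa using hζ.pow_of_dvd (Nat.succ_ne_zero n) (dvd_mul_left _ _)
  have hw : IsPrimitiveRoot (ζ ^ ((n + 1) * (3 * (n + 1) - b))) 3 := by
    rw [pow_mul]
    exact hcube.pow_of_coprime _
      (Nat.Coprime.symm <| Nat.prime_three.coprime_iff_not_dvd.2 <| by omega)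
  have hsum := hw.geom_sum_eq_zero (by norm_num)
  simp only [sum_range_succ, sum_range_zero] at hsum
  rw [aeval_borweinPoly_three_two hζ, aeval_borweinPoly_three_two hζ, hgcd₁, hgcd₂,
    if_pos dvd_rfl, mul_assoc 2, pow_mul ζ 2, ← pow_mul, mul_comm 2, pow_mul]
  linear_combination (9 : ℂ) ^ (n + 1) * hsum

theorem mul_borweinM_three_two_eq_sum (hζ : IsPrimitiveRoot ζ (3 * (n + 1))) {b : ℕ}
    (hb : b < 3 * (n + 1)) :
    (3 * (n + 1) : ℂ) * borweinM 3 2 n b =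
      ∑ j ∈ range (3 * (n + 1)),
        aeval (ζ ^ j) (borweinPoly 3 2 n) * ζ ^ (j * (3 * (n + 1) - b)) := by
  have hdeg : (borweinPoly 3 2 n).natDegree < (borweinDeg 3 2 n + 1) * (3 * (n + 1)) := by
    have hbound := natDegree_borweinPoly_le (by norm_num : 0 < 3) 2 n
    have hdeg : borweinDeg 3 2 n = 6 * (n + 1) ^ 2 := by simp [borweinDeg]; omega
    rw [hdeg]
    nlinarith
  rw [← hζ.mul_sum_coeff_add_mul_eq_sum_aeval hb hdeg]
  simp [borweinM, borweinCoeff]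

end ThreeTwo

theorem stmt_5 (n b : ℕ) (hn : 1 ≤ n) (hb : b < 3 * (n + 1)) (hdvd : ¬ 3 ∣ b) :
    borweinM 3 2 n b < 0 := by
  obtain ⟨ζ, hζ⟩ : ∃ ζ : ℂ, IsPrimitiveRoot ζ (3 * (n + 1)) :=
    ⟨_, Complex.isPrimitiveRoot_exp _ (by omega)⟩
  set F : ℕ → ℂ := fun j ↦ aeval (ζ ^ j) (borweinPoly 3 2 n) * ζ ^ (j * (3 * (n + 1) - b))
  set E := range (3 * (n + 1)) \ {n + 1, 2 * (n + 1)}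
  have hrest : (3 * (n + 1) : ℂ) * borweinM 3 2 n b + 9 ^ (n + 1) = ∑ j ∈ E, F j := by
    have hsub : {n + 1, 2 * (n + 1)} ⊆ range (3 * (n + 1)) := by
      intro j hj; simp only [mem_insert, mem_singleton] at hj; simp only [mem_range]; omega
    rw [mul_borweinM_three_two_eq_sum hζ hb, ← sum_sdiff hsub, sum_pair (by omega),
      aeval_borweinPoly_three_two_main_terms hζ hb hdvd]
    ring
  have hE : ‖∑ j ∈ E, F j‖ ≤ 3 * (n + 1) * 3 ^ (n + 1) := by
    refine (norm_sum_le _ _).trans ((sum_le_card_nsmul _ _ (3 ^ (n + 1)) fun j hj ↦ ?_).trans ?_)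
    · simp only [E, mem_sdiff, mem_range, mem_insert, mem_singleton, not_or] at hj
      rw [norm_mul, norm_pow, hζ.norm'_eq_one (by omega), one_pow, mul_one]
      exact norm_aeval_borweinPoly_three_two_le hζ hj.1 hj.2.1 hj.2.2
    · rw [nsmul_eq_mul]
      gcongr
      exact_mod_cast (card_le_card sdiff_subset).trans (card_range _).le
  have hmain : (3 * (n + 1) : ℝ) * 3 ^ (n + 1) < 9 ^ (n + 1) := by
    rw [show (9 : ℝ) = 3 * 3 by norm_num, mul_pow]
    gcongr
    exact_mod_cast three_mul_lt_three_pow (by omega)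
  have hlt : |3 * (n + 1) * borweinM 3 2 n b + 9 ^ (n + 1)| < 9 ^ (n + 1) := by
    rw [← Int.cast_lt (R := ℝ), Int.cast_abs, ← Complex.norm_intCast]
    push_cast
    rw [hrest]
    exact hE.trans_lt hmain
  nlinarith [abs_lt.1 hlt]
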